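/- Let $X$ and $Y$ be independent random vectors, let $Y'$ be an independent copy of $Y$, and let $f$ be a measurable real-valued function. Then for any $a\in\mathbb{R}$: $\mathbb{P}(f(X,Y)=a)^2 \le \mathbb{P}\big(f(X,Y)-f(X,Y')=0\big)$. -/

import Mathlib

open MeasureTheory ProbabilityTheory
open scoped ENNReal

/-! Given `X = x`, the events `f(x, Y) = a` and `f(x, Y') = a` are independent with the same
probability `g x = ℙ(f(x, Y) = a)`. Hence the probability that both occur is `𝔼[g(X)²]`, which by
Cauchy–Schwarz is at least `𝔼[g(X)]² = ℙ(f(X, Y) = a)²`; and when both occur,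
`f(X, Y) - f(X, Y') = 0`. -/

theorem sq_lintegral_le_lintegral_sq {α : Type*} [MeasurableSpace α] {μ : Measure α}
    [IsProbabilityMeasure μ] {g : α → ℝ≥0∞} (hg : AEMeasurable g μ) :
    (∫⁻ x, g x ∂μ) ^ 2 ≤ ∫⁻ x, g x ^ 2 ∂μ := by
  have holder := ENNReal.lintegral_mul_le_Lp_mul_Lq μ Real.HolderConjugate.two_two hg
    (aemeasurable_const (b := (1 : ℝ≥0∞)))
  simp only [Pi.mul_apply, mul_one, one_pow, ENNReal.one_rpow, lintegral_const, measure_univ,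
    ENNReal.rpow_two] at holder
  calc (∫⁻ x, g x ∂μ) ^ 2 ≤ ((∫⁻ x, g x ^ 2 ∂μ) ^ (1 / 2 : ℝ)) ^ 2 := by gcongr
    _ = ∫⁻ x, g x ^ 2 ∂μ := by
      rw [← ENNReal.rpow_natCast, ← ENNReal.rpow_mul]; norm_num

section

variable {α β : Type*} [MeasurableSpace α] [MeasurableSpace β]

theorem MeasurableSet.setOf_mem_and_mem {s : Set (α × β)} (hs : MeasurableSet s) :
    MeasurableSet {p : α × β × β | (p.1, p.2.1) ∈ s ∧ (p.1, p.2.2) ∈ s} :=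
  (hs.preimage (by fun_prop)).inter (hs.preimage (by fun_prop))

theorem Measure.prod_prod_apply_setOf_mem_and_mem (μ : Measure α) (ν : Measure β) [SFinite ν]
    {s : Set (α × β)} (hs : MeasurableSet s) :
    μ.prod (ν.prod ν) {p | (p.1, p.2.1) ∈ s ∧ (p.1, p.2.2) ∈ s} =
      ∫⁻ x, ν (Prod.mk x ⁻¹' s) ^ 2 ∂μ := by
  rw [Measure.prod_apply hs.setOf_mem_and_mem]
  congr with x
  rw [sq, ← Measure.prod_prod]
  rfl

theorem Measure.sq_prod_apply_le (μ : Measure α) (ν : Measure β) [IsProbabilityMeasure μ]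
    [SFinite ν] {s : Set (α × β)} (hs : MeasurableSet s) :
    μ.prod ν s ^ 2 ≤ μ.prod (ν.prod ν) {p | (p.1, p.2.1) ∈ s ∧ (p.1, p.2.2) ∈ s} := by
  rw [Measure.prod_apply hs, Measure.prod_prod_apply_setOf_mem_and_mem μ ν hs]
  exact sq_lintegral_le_lintegral_sq (measurable_measure_prodMk_left hs).aemeasurable

end

section

variable {Ω α β : Type*} [MeasurableSpace Ω] [MeasurableSpace α] [MeasurableSpace β]
  {P : Measure Ω} [IsProbabilityMeasure P] {X : Ω → α} {Y Y' : Ω → β}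

theorem map_prod_prod_eq_of_indepFun (hX : Measurable X) (hY : Measurable Y)
    (hY' : Measurable Y') (hYY' : IndepFun Y Y' P) (hXYY' : IndepFun X (fun ω ↦ (Y ω, Y' ω)) P)
    (hid : IdentDistrib Y' Y P P) :
    P.map (fun ω ↦ (X ω, Y ω, Y' ω)) = (P.map X).prod ((P.map Y).prod (P.map Y)) := by
  rw [(indepFun_iff_map_prod_eq_prod_map_map hX.aemeasurable
      (hY.prodMk hY').aemeasurable).1 hXYY',
    (indepFun_iff_map_prod_eq_prod_map_map hY.aemeasurable hY'.aemeasurable).1 hYY', hid.map_eq]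

theorem sq_measure_mem_le_measure_mem_and_mem (hX : Measurable X) (hY : Measurable Y)
    (hY' : Measurable Y') (hYY' : IndepFun Y Y' P) (hXYY' : IndepFun X (fun ω ↦ (Y ω, Y' ω)) P)
    (hid : IdentDistrib Y' Y P P) {s : Set (α × β)} (hs : MeasurableSet s) :
    P {ω | (X ω, Y ω) ∈ s} ^ 2 ≤ P {ω | (X ω, Y ω) ∈ s ∧ (X ω, Y' ω) ∈ s} := by
  have : IsProbabilityMeasure (P.map X) := Measure.isProbabilityMeasure_map hX.aemeasurable
  have hXY : IndepFun X Y P := hXYY'.comp measurable_id measurable_fst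
  calc P {ω | (X ω, Y ω) ∈ s} ^ 2 = (P.map fun ω ↦ (X ω, Y ω)) s ^ 2 := by
        rw [Measure.map_apply (hX.prodMk hY) hs]; rfl
    _ = (P.map X).prod (P.map Y) s ^ 2 := by
        rw [(indepFun_iff_map_prod_eq_prod_map_map hX.aemeasurable hY.aemeasurable).1 hXY]
    _ ≤ (P.map X).prod ((P.map Y).prod (P.map Y))
          {p | (p.1, p.2.1) ∈ s ∧ (p.1, p.2.2) ∈ s} := Measure.sq_prod_apply_le _ _ hs
    _ = P {ω | (X ω, Y ω) ∈ s ∧ (X ω, Y' ω) ∈ s} := by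
        rw [← map_prod_prod_eq_of_indepFun hX hY hY' hYY' hXYY' hid,
          Measure.map_apply (hX.prodMk (hY.prodMk hY')) hs.setOf_mem_and_mem]
        rfl

end

/-- Decoupling, one variable: if `X, Y, Y'` are mutually independent random vectors
with `Y' ~ Y`, and `f` is measurable, then for any `a ∈ ℝ`,
`P(f(X,Y) = a)² ≤ P(f(X,Y) - f(X,Y') = 0)`. -/
theorem stmt_6 (k l : ℕ)
    (Ω : Type*) [MeasureSpace Ω] [IsProbabilityMeasure (ℙ : Measure Ω)]
    (X : Ω → (Fin k → ℝ)) (Y Y' : Ω → (Fin l → ℝ))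
    (hX : Measurable X) (hY : Measurable Y) (hY' : Measurable Y')
    (f : (Fin k → ℝ) → (Fin l → ℝ) → ℝ)
    (hf : Measurable (fun q : (Fin k → ℝ) × (Fin l → ℝ) => f q.1 q.2))
    (hYY' : IndepFun Y Y' ℙ)
    (hXYY' : IndepFun X (fun ω => (Y ω, Y' ω)) ℙ)
    (hid : IdentDistrib Y' Y ℙ ℙ) (a : ℝ) :
    (ℙ {ω | f (X ω) (Y ω) = a}).toReal ^ 2 ≤
      (ℙ {ω | f (X ω) (Y ω) - f (X ω) (Y' ω) = 0}).toReal := by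
  have hsq := sq_measure_mem_le_measure_mem_and_mem hX hY hY' hYY' hXYY' hid
    (hf (measurableSet_singleton a))
  have hboth : ℙ {ω | f (X ω) (Y ω) = a ∧ f (X ω) (Y' ω) = a} ≤
      ℙ {ω | f (X ω) (Y ω) - f (X ω) (Y' ω) = 0} :=
    measure_mono fun ω ⟨h, h'⟩ ↦ sub_eq_zero.mpr (h.trans h'.symm)
  rw [← ENNReal.toReal_pow]
  exact ENNReal.toReal_mono (measure_ne_top _ _) (hsq.trans hboth)
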